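/- arXiv:2002.11286 — 7 statements merged into one kernel-verified Lean document; each statement's English description precedes it below -/
import Mathlib

section
/- Let ε > 0, A > 0, and let p < 0. Then the equation A·Π_ε(H) = p has exactly one solution H in (0, ∞), and this solution lies in the interval (0, ε). -/
/-!
Writing `Π_ε(h) = ε² (h - ε) / h⁴` shows that `Π_ε ≥ 0` on `[ε, ∞)`, so every solution
of `Π_ε(H) = p / A < 0` lies in `(0, ε)`. There `Π_ε` is strictly increasing, which
gives uniqueness, and it runs continuously from `-∞` (as `h → 0⁺`) up to `Π_ε(ε) = 0`,
which gives existence by the intermediate value theorem.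
-/

/-- The disjoining pressure `Π_ε(h) = ε²/h³ − ε³/h⁴`. -/
noncomputable def disjoiningPressure (ε h : ℝ) : ℝ := ε^2 / h^3 - ε^3 / h^4

open Filter Set Topology

section DisjoiningPressure

variable {ε h : ℝ}

-- Both sides are `0` at `h = 0`, so the identity needs no side condition.
theorem disjoiningPressure_eq_mul_inv_pow (ε h : ℝ) :
    disjoiningPressure ε h = ε ^ 2 * (h - ε) * (h⁻¹) ^ 4 := by
  rcases eq_or_ne h 0 with rfl | hh
  · simp [disjoiningPressure]
  · simp only [disjoiningPressure]
    field_simp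

@[simp]
theorem disjoiningPressure_self (ε : ℝ) : disjoiningPressure ε ε = 0 := by
  simp [disjoiningPressure_eq_mul_inv_pow]

theorem disjoiningPressure_nonneg_of_le (hh : ε ≤ h) : 0 ≤ disjoiningPressure ε h := by
  rw [disjoiningPressure_eq_mul_inv_pow]
  have : 0 ≤ h - ε := sub_nonneg.2 hh
  positivity

theorem lt_of_disjoiningPressure_neg (hneg : disjoiningPressure ε h < 0) : h < ε :=
  lt_of_not_ge fun hεh ↦ hneg.not_ge (disjoiningPressure_nonneg_of_le hεh)

theorem strictMonoOn_disjoiningPressure (ε : ℝ) :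
    StrictMonoOn (disjoiningPressure ε) (Ioc 0 ε) := by
  rintro a ⟨ha, -⟩ b ⟨hb, hbε⟩ hab
  have hε : 0 < ε := hb.trans_le hbε
  simp only [disjoiningPressure_eq_mul_inv_pow, mul_assoc]
  gcongr ε ^ 2 * ?_
  -- both factors of `(ε - h) * h⁻¹ ^ 4` are positive and decreasing on `(0, ε]`
  rw [← neg_lt_neg_iff, ← neg_mul, ← neg_mul, neg_sub, neg_sub]
  calc (ε - b) * (b⁻¹) ^ 4 ≤ (ε - b) * (a⁻¹) ^ 4 := by gcongr
    _ < (ε - a) * (a⁻¹) ^ 4 := by gcongr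

theorem continuousOn_disjoiningPressure (ε : ℝ) :
    ContinuousOn (disjoiningPressure ε) (Ioi 0) := fun x hx ↦ by
  have : x ≠ 0 := ne_of_gt hx
  unfold disjoiningPressure
  fun_prop (disch := positivity)

theorem tendsto_disjoiningPressure_nhdsGT_zero (hε : 0 < ε) :
    Tendsto (disjoiningPressure ε) (𝓝[>] 0) atBot := by
  simp only [funext (disjoiningPressure_eq_mul_inv_pow ε)]
  have hlim : Tendsto (fun h ↦ ε ^ 2 * (h - ε)) (𝓝[>] 0) (𝓝 (ε ^ 2 * (0 - ε))) :=
    tendsto_nhdsWithin_of_tendsto_nhds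
      ((by fun_prop : Continuous fun h ↦ ε ^ 2 * (h - ε)).tendsto 0)
  refine hlim.neg_mul_atTop (mul_neg_of_pos_of_neg (by positivity) (by linarith)) ?_
  exact (tendsto_pow_atTop (by norm_num)).comp tendsto_inv_nhdsGT_zero

theorem Iio_zero_subset_image_disjoiningPressure_Ioo (hε : 0 < ε) :
    Iio 0 ⊆ disjoiningPressure ε '' Ioo 0 ε := by
  have hright : Tendsto (disjoiningPressure ε) (𝓝[<] ε) (𝓝 0) := by
    rw [← disjoiningPressure_self ε]
    exact tendsto_nhdsWithin_of_tendsto_nhds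
      ((continuousOn_disjoiningPressure ε).continuousAt (Ioi_mem_nhds hε))
  exact isPreconnected_Ioo.intermediate_value_Iio
    (le_principal_iff.2 (Ioo_mem_nhdsGT hε)) (le_principal_iff.2 (Ioo_mem_nhdsLT hε))
    ((continuousOn_disjoiningPressure ε).mono Ioo_subset_Ioi_self)
    (tendsto_disjoiningPressure_nhdsGT_zero hε) hright

end DisjoiningPressure

theorem stmt_4 (ε A p : ℝ) (hε : 0 < ε) (hA : 0 < A) (hp : p < 0) :
    ∃ H ∈ Set.Ioo (0:ℝ) ε, A * disjoiningPressure ε H = p ∧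
      ∀ H' : ℝ, 0 < H' → A * disjoiningPressure ε H' = p → H' = H := by
  have hq : p / A < 0 := div_neg_of_neg_of_pos hp hA
  have hsolve : ∀ H, A * disjoiningPressure ε H = p ↔ disjoiningPressure ε H = p / A := by
    intro H
    rw [eq_div_iff hA.ne', mul_comm]
  obtain ⟨H, hH, hHq⟩ := Iio_zero_subset_image_disjoiningPressure_Ioo hε hq
  refine ⟨H, hH, (hsolve H).2 hHq, fun H' hH'pos hH' ↦ ?_⟩
  rw [hsolve] at hH'
  have hH'ε : H' < ε := lt_of_disjoiningPressure_neg (hH' ▸ hq)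
  exact (strictMonoOn_disjoiningPressure ε).injOn ⟨hH'pos, hH'ε.le⟩ ⟨hH.1, hH.2.le⟩
    (hH'.trans hHq.symm)
end

section
/- Let ε > 0 and A > 0. For each p < 0 let H(p) denote the unique solution in (0, ε) of A·Π_ε(H) = p. Then H(p)·|p|^{1/4} → ε^{3/4}·A^{1/4} as p → −∞; that is, H(p) ~ ε^{3/4}(A/|p|)^{1/4} in the limit p → −∞. -/
open Filter Topology

lemma pow_four_mul_disjoiningPressure {ε h : ℝ} (hh : h ≠ 0) :
    h ^ 4 * disjoiningPressure ε h = ε ^ 2 * (h - ε) := by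
  unfold disjoiningPressure
  field_simp

lemma mul_abs_rpow_quarter_of_mul_disjoiningPressure_eq {ε A h p : ℝ} (hh : 0 < h) (hp : p ≤ 0)
    (heq : A * disjoiningPressure ε h = p) :
    h * |p| ^ ((1:ℝ)/4) = (A * ε ^ 2 * (ε - h)) ^ ((1:ℝ)/4) := by
  have hpow : h ^ 4 * |p| = A * ε ^ 2 * (ε - h) := by
    rw [abs_of_nonpos hp, ← heq]
    linear_combination (-A) * pow_four_mul_disjoiningPressure (ε := ε) hh.ne'
  rw [← hpow, Real.mul_rpow (by positivity) (abs_nonneg p),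
    show (1:ℝ)/4 = ((4:ℕ):ℝ)⁻¹ by norm_num, Real.pow_rpow_inv_natCast hh.le (by norm_num)]

lemma tendsto_abs_rpow_quarter_atBot : Tendsto (fun p : ℝ => |p| ^ ((1:ℝ)/4)) atBot atTop :=
  (tendsto_rpow_atTop (by norm_num)).comp tendsto_abs_atBot_atTop

theorem stmt_5 (ε A : ℝ) (hε : 0 < ε) (hA : 0 < A) (H : ℝ → ℝ)
    (hH : ∀ p : ℝ, p < 0 →
      H p ∈ Set.Ioo (0:ℝ) ε ∧ A * disjoiningPressure ε (H p) = p) :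
    Filter.Tendsto (fun p : ℝ => H p * |p| ^ ((1:ℝ)/4)) Filter.atBot
      (nhds (ε ^ ((3:ℝ)/4) * A ^ ((1:ℝ)/4))) := by
  have hneg : ∀ᶠ p : ℝ in atBot, p < 0 := eventually_lt_atBot 0
  have hrescaled : ∀ᶠ p in atBot,
      H p * |p| ^ ((1:ℝ)/4) = (A * ε ^ 2 * (ε - H p)) ^ ((1:ℝ)/4) := by
    filter_upwards [hneg] with p hp
    exact mul_abs_rpow_quarter_of_mul_disjoiningPressure_eq (hH p hp).1.1 hp.le (hH p hp).2
  have hH_zero : Tendsto H atBot (𝓝 0) := by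
    have hbound : ∀ᶠ p in atBot, H p ≤ (A * ε ^ 3) ^ ((1:ℝ)/4) / |p| ^ ((1:ℝ)/4) := by
      filter_upwards [hneg, hrescaled] with p hp hresc
      obtain ⟨⟨h0, hlt⟩, -⟩ := hH p hp
      have hAε : 0 < A * ε ^ 2 := by positivity
      rw [le_div_iff₀ (Real.rpow_pos_of_pos (abs_pos.mpr hp.ne) _), hresc]
      exact Real.rpow_le_rpow (by nlinarith) (by nlinarith) (by norm_num)
    refine tendsto_of_tendsto_of_tendsto_of_le_of_le' tendsto_const_nhds
      (tendsto_const_nhds.div_atTop tendsto_abs_rpow_quarter_atBot) ?_ hbound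
    filter_upwards [hneg] with p hp using (hH p hp).1.1.le
  have hlimit : (A * ε ^ 2 * (ε - 0)) ^ ((1:ℝ)/4) = ε ^ ((3:ℝ)/4) * A ^ ((1:ℝ)/4) := by
    rw [sub_zero, mul_assoc, ← pow_succ, Real.mul_rpow hA.le (by positivity),
      ← Real.rpow_natCast ε 3, ← Real.rpow_mul hε.le, mul_comm]
    norm_num
  rw [← hlimit]
  refine Tendsto.congr' (EventuallyEq.symm hrescaled) ?_
  exact ((tendsto_const_nhds.sub hH_zero).const_mul _).rpow_const (Or.inr (by norm_num))
end

section
/- Fix p > 0 and A > 0. For each sufficiently small ε > 0 (so that p < 27A/(256ε)), let H_s(ε) denote the unique solution of A·Π_ε(H) = p in the interval (ε, 4ε/3). Then (H_s(ε) − ε)/ε² → p/A as ε → 0⁺; that is, the saddle point has the expansion H_s = ε + ε²p/A + O(ε³). -/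
/-!
Clearing denominators, `A · Π_ε(H) = p` reads `(H - ε)/ε² = (p/A)(H/ε)⁴`. Since `H/ε ∈ (1, 4/3)`,
the left side is bounded, so `H = ε + O(ε²)`, hence `H/ε → 1` and the right side tends to `p/A`.
-/

open Filter Topology Set

lemma disjoiningPressure_eq {h : ℝ} (ε : ℝ) (hh : h ≠ 0) :
    disjoiningPressure ε h = ε ^ 2 * (h - ε) / h ^ 4 := by
  unfold disjoiningPressure
  field_simp

lemma sub_div_sq_eq_of_mul_disjoiningPressure_eq {A p ε H : ℝ} (hA : A ≠ 0) (hε : ε ≠ 0)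
    (hH : H ≠ 0) (hsol : A * disjoiningPressure ε H = p) :
    (H - ε) / ε ^ 2 = p / A * (H / ε) ^ 4 := by
  rw [disjoiningPressure_eq ε hH] at hsol
  rw [← hsol]
  field_simp

lemma eventually_lt_div_nhdsGT_zero {a : ℝ} (ha : 0 < a) (p : ℝ) :
    ∀ᶠ ε in 𝓝[>] (0 : ℝ), p < a / ε := by
  simpa only [div_eq_mul_inv] using
    (tendsto_inv_nhdsGT_zero.const_mul_atTop ha).eventually_gt_atTop p

lemma tendsto_div_self_of_isBoundedUnder {H : ℝ → ℝ}
    (hb : IsBoundedUnder (· ≤ ·) (𝓝[>] 0) (fun ε => ‖(H ε - ε) / ε ^ 2‖)) :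
    Tendsto (fun ε => H ε / ε) (𝓝[>] 0) (𝓝 1) := by
  have hsmall : Tendsto (fun ε => ε * ((H ε - ε) / ε ^ 2)) (𝓝[>] 0) (𝓝 0) :=
    (tendsto_nhdsWithin_of_tendsto_nhds tendsto_id).zero_mul_isBoundedUnder_le hb
  have hexpand : ∀ᶠ ε in 𝓝[>] (0 : ℝ), 1 + ε * ((H ε - ε) / ε ^ 2) = H ε / ε := by
    filter_upwards [self_mem_nhdsWithin] with ε (hε : 0 < ε)
    field_simp
    ring
  simpa using (hsmall.const_add 1).congr' hexpand

theorem stmt_6_general (A p : ℝ) (hA : 0 < A) (Hs : ℝ → ℝ)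
    (hHs : ∀ ε : ℝ, 0 < ε → p < 27*A/(256*ε) →
      Hs ε ∈ Set.Ioo ε (4*ε/3) ∧ A * disjoiningPressure ε (Hs ε) = p) :
    Filter.Tendsto (fun ε : ℝ => (Hs ε - ε) / ε^2)
      (nhdsWithin 0 (Set.Ioi 0)) (nhds (p/A)) := by
  have hsol : ∀ᶠ ε in 𝓝[>] (0 : ℝ),
      0 < ε ∧ Hs ε ∈ Ioo ε (4 * ε / 3) ∧ A * disjoiningPressure ε (Hs ε) = p := by
    filter_upwards [self_mem_nhdsWithin, eventually_lt_div_nhdsGT_zero (a := 27 * A / 256)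
      (by positivity) p] with ε (hε : 0 < ε) hε_small
    exact ⟨hε, hHs ε hε (by rwa [div_div] at hε_small)⟩
  have hexpand : ∀ᶠ ε in 𝓝[>] (0 : ℝ), (Hs ε - ε) / ε ^ 2 = p / A * (Hs ε / ε) ^ 4 :=
    hsol.mono fun ε ⟨hε, hmem, heq⟩ =>
      sub_div_sq_eq_of_mul_disjoiningPressure_eq hA.ne' hε.ne' (hε.trans hmem.1).ne' heq
  have hbound : IsBoundedUnder (· ≤ ·) (𝓝[>] 0) (fun ε => ‖(Hs ε - ε) / ε ^ 2‖) := by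
    refine isBoundedUnder_of_eventually_le (a := ‖p / A‖ * (4 / 3) ^ 4) ?_
    filter_upwards [hsol, hexpand] with ε ⟨hε, hmem, _⟩ hexp
    have hratio : 0 ≤ Hs ε / ε ∧ Hs ε / ε ≤ 4 / 3 := by
      constructor
      · exact div_nonneg (hε.trans hmem.1).le hε.le
      · rw [div_le_iff₀ hε]; linarith [hmem.2]
    rw [hexp, norm_mul, norm_pow, Real.norm_of_nonneg hratio.1]
    exact mul_le_mul_of_nonneg_left (pow_le_pow_left₀ hratio.1 hratio.2 4) (norm_nonneg _)
  simpa using ((tendsto_div_self_of_isBoundedUnder hbound).pow 4).const_mul (p / A)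
    |>.congr' (hexpand.mono fun _ h => h.symm)

theorem stmt_6 (A p : ℝ) (hA : 0 < A) (hp : 0 < p) (Hs : ℝ → ℝ)
    (hHs : ∀ ε : ℝ, 0 < ε → p < 27*A/(256*ε) →
      Hs ε ∈ Set.Ioo ε (4*ε/3) ∧ A * disjoiningPressure ε (Hs ε) = p) :
    Filter.Tendsto (fun ε : ℝ => (Hs ε - ε) / ε^2)
      (nhdsWithin 0 (Set.Ioi 0)) (nhds (p/A)) :=
  stmt_6_general A p hA Hs hHs
end

section
/- Let ε > 0, A₁, A₂ > 0, p ∈ ℝ, 0 < s < L, and let h : [0, L] → (0, ∞) be continuously differentiable on [0, L], twice continuously differentiable on [0, s] and on [s, L], satisfying h''(x) = A₁·Π_ε(h(x)) − p on (0, s) and h''(x) = A₂·Π_ε(h(x)) − p on (s, L), together with h'(0) = 0 and h'(L) = 0. Then the matching condition (A₁ − A₂)·U_ε(h(s)) + p·(h(0) − h(L)) = A₁·U_ε(h(0)) − A₂·U_ε(h(L)) holds. -/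
/-- The wetting potential `U_ε(h) = −ε²/(2h²) + ε³/(3h³)`. -/
noncomputable def wettingPotential (ε h : ℝ) : ℝ := -ε^2 / (2*h^2) + ε^3 / (3*h^3)

open Set

lemma hasDerivAt_wettingPotential (ε : ℝ) {y : ℝ} (hy : y ≠ 0) :
    HasDerivAt (wettingPotential ε) (disjoiningPressure ε y) y := by
  have h2 := (hasDerivAt_const y (-ε ^ 2)).div ((hasDerivAt_pow 2 y).const_mul (2 : ℝ))
    (by positivity)
  have h3 := (hasDerivAt_const y (ε ^ 3)).div ((hasDerivAt_pow 3 y).const_mul (3 : ℝ))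
    (by positivity)
  refine (h2.add h3).congr_deriv ?_
  unfold disjoiningPressure
  field_simp
  ring

lemma eq_of_hasDerivAt_zero {a b : ℝ} (hab : a < b) {F : ℝ → ℝ}
    (hc : ContinuousOn F (Icc a b)) (hd : ∀ x ∈ Ioo a b, HasDerivAt F 0 x) : F b = F a := by
  obtain ⟨c, -, hslope⟩ := exists_hasDerivAt_eq_slope F (fun _ ↦ 0) hab hc hd
  rw [eq_div_iff (sub_ne_zero.2 hab.ne')] at hslope
  linarith

/-- Energy conservation for the autonomous equation `h'' = g(h)`, where `G' = g`. -/
lemma half_sq_deriv_sub_potential_eq {a b : ℝ} (hab : a < b) {h h' G g : ℝ → ℝ}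
    (hG : ∀ x ∈ Icc a b, HasDerivAt G (g (h x)) (h x))
    (hd1 : ∀ x ∈ Icc a b, HasDerivWithinAt h (h' x) (Icc a b) x)
    (hcont : ContinuousOn h' (Icc a b))
    (hd2 : ∀ x ∈ Ioo a b, HasDerivAt h' (g (h x)) x) :
    h' b ^ 2 / 2 - G (h b) = h' a ^ 2 / 2 - G (h a) := by
  have hGh : ContinuousOn (fun x ↦ G (h x)) (Icc a b) := fun x hx ↦
    (hG x hx).continuousAt.comp_continuousWithinAt (hd1 x hx).continuousWithinAt
  refine eq_of_hasDerivAt_zero hab (((hcont.pow 2).div_const 2).sub hGh) fun x hx ↦ ?_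
  have hhx : HasDerivAt h (h' x) x :=
    (hd1 x (Ioo_subset_Icc_self hx)).hasDerivAt (Icc_mem_nhds hx.1 hx.2)
  have hGx := (hG x (Ioo_subset_Icc_self hx)).comp x hhx
  refine ((((hd2 x hx).pow 2).div_const 2).sub hGx).congr_deriv ?_
  push_cast
  ring

lemma wetting_energy_eq {ε A p a b : ℝ} (hab : a < b) {h h' : ℝ → ℝ}
    (hne : ∀ x ∈ Icc a b, h x ≠ 0)
    (hd1 : ∀ x ∈ Icc a b, HasDerivWithinAt h (h' x) (Icc a b) x)
    (hcont : ContinuousOn h' (Icc a b))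
    (hd2 : ∀ x ∈ Ioo a b, HasDerivAt h' (A * disjoiningPressure ε (h x) - p) x) :
    h' b ^ 2 / 2 - (A * wettingPotential ε (h b) - p * h b) =
      h' a ^ 2 / 2 - (A * wettingPotential ε (h a) - p * h a) :=
  half_sq_deriv_sub_potential_eq (G := fun y ↦ A * wettingPotential ε y - p * y)
    (g := fun y ↦ A * disjoiningPressure ε y - p) hab
    (fun x hx ↦ ((hasDerivAt_wettingPotential ε (hne x hx)).const_mul A).fun_sub
      (hasDerivAt_const_mul p))
    hd1 hcont hd2

theorem stmt_8_general (ε A₁ A₂ p s L : ℝ)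
    (hs : 0 < s) (hsL : s < L)
    (h h' : ℝ → ℝ)
    (hpos : ∀ x ∈ Set.Icc 0 L, 0 < h x)
    (hd1 : ∀ x ∈ Set.Icc 0 L, HasDerivWithinAt h (h' x) (Set.Icc 0 L) x)
    (hcont : ContinuousOn h' (Set.Icc 0 L))
    (hd2a : ∀ x ∈ Set.Ioo 0 s,
      HasDerivAt h' (A₁ * disjoiningPressure ε (h x) - p) x)
    (hd2b : ∀ x ∈ Set.Ioo s L,
      HasDerivAt h' (A₂ * disjoiningPressure ε (h x) - p) x)
    (hb0 : h' 0 = 0) (hbL : h' L = 0) :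
    (A₁ - A₂) * wettingPotential ε (h s) + p * (h 0 - h L) =
      A₁ * wettingPotential ε (h 0) - A₂ * wettingPotential ε (h L) := by
  have hleft : Icc 0 s ⊆ Icc 0 L := Icc_subset_Icc le_rfl hsL.le
  have hright : Icc s L ⊆ Icc 0 L := Icc_subset_Icc hs.le le_rfl
  have e₁ := wetting_energy_eq hs (fun x hx ↦ (hpos x (hleft hx)).ne')
    (fun x hx ↦ (hd1 x (hleft hx)).mono hleft) (hcont.mono hleft) hd2a
  have e₂ := wetting_energy_eq hsL (fun x hx ↦ (hpos x (hright hx)).ne')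
    (fun x hx ↦ (hd1 x (hright hx)).mono hright) (hcont.mono hright) hd2b
  rw [hb0] at e₁
  rw [hbL] at e₂
  linarith

theorem stmt_8 (ε A₁ A₂ p s L : ℝ) (hε : 0 < ε) (hA₁ : 0 < A₁) (hA₂ : 0 < A₂)
    (hs : 0 < s) (hsL : s < L)
    (h h' : ℝ → ℝ)
    (hpos : ∀ x ∈ Set.Icc 0 L, 0 < h x)
    (hd1 : ∀ x ∈ Set.Icc 0 L, HasDerivWithinAt h (h' x) (Set.Icc 0 L) x)
    (hcont : ContinuousOn h' (Set.Icc 0 L))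
    (hd2a : ∀ x ∈ Set.Ioo 0 s,
      HasDerivAt h' (A₁ * disjoiningPressure ε (h x) - p) x)
    (hd2b : ∀ x ∈ Set.Ioo s L,
      HasDerivAt h' (A₂ * disjoiningPressure ε (h x) - p) x)
    (hb0 : h' 0 = 0) (hbL : h' L = 0) :
    (A₁ - A₂) * wettingPotential ε (h s) + p * (h 0 - h L) =
      A₁ * wettingPotential ε (h 0) - A₂ * wettingPotential ε (h L) :=
  stmt_8_general ε A₁ A₂ p s L hs hsL h h' hpos hd1 hcont hd2a hd2b hb0 hbL
end

section
/- Let ε > 0, L > 0, 0 < A_min ≤ A_max, and E₀ ∈ ℝ. Then there exists a constant c > 0, depending only on ε, L, A_min, A_max, and E₀, such that for every measurable A : [0, L] → [A_min, A_max] and every continuously differentiable g : [0, L] → (0, ∞) satisfying ∫₀^L [A(x)·U_ε(g(x)) + (1/2)g'(x)²] dx ≤ E₀, one has g(x) ≥ c for all x ∈ [0, L]. -/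
/-!
Since `U_ε ≥ -1/6`, the energy bound controls `∫ g'²`, and then
`(g v - g u)² ≤ |v - u| ∫ g'²` (Cauchy–Schwarz). So if `g (x₀) ≤ τ`, then `g ≤ 2τ` on an interval
of length comparable to `τ²` around `x₀`. There `U_ε(g) ≳ ε³/τ³`, so this interval alone carries
energy `≳ ε³/τ`, which exceeds the energy bound once `τ` is small.
-/

open MeasureTheory Set

lemma wettingPotential_eq {ε h : ℝ} (hh : h ≠ 0) :
    wettingPotential ε h = (2 * ε ^ 3 - 3 * ε ^ 2 * h) / (6 * h ^ 3) := by
  unfold wettingPotential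
  field_simp
  ring

-- `h³ - 3ε²h + 2ε³ = (h - ε)²(h + 2ε)`: the minimum `-1/6` is attained at `h = ε`.
lemma neg_one_div_six_le_wettingPotential {ε h : ℝ} (hε : 0 ≤ ε) (hh : 0 < h) :
    -(1 / 6) ≤ wettingPotential ε h := by
  rw [wettingPotential_eq hh.ne', le_div_iff₀ (by positivity)]
  nlinarith [mul_nonneg (sq_nonneg (h - ε)) (by linarith : 0 ≤ h + 2 * ε)]

lemma div_le_wettingPotential {ε h τ : ℝ} (hh : 0 < h) (hhτ : h ≤ τ) (hτε : 2 * τ ≤ ε) :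
    ε ^ 3 / (12 * τ ^ 3) ≤ wettingPotential ε h := by
  have hε : 0 ≤ ε := by linarith
  calc ε ^ 3 / (12 * τ ^ 3) ≤ ε ^ 3 / (12 * h ^ 3) := by gcongr
    _ ≤ wettingPotential ε h := by
      rw [wettingPotential_eq hh.ne', div_le_div_iff₀ (by positivity) (by positivity)]
      nlinarith [mul_nonneg (mul_nonneg (sq_nonneg ε) (pow_pos hh 3).le)
        (by linarith : 0 ≤ ε - 2 * h)]

lemma continuousOn_wettingPotential_comp {g : ℝ → ℝ} {s : Set ℝ} (hg : ContinuousOn g s)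
    (hg0 : ∀ x ∈ s, g x ≠ 0) (ε : ℝ) : ContinuousOn (fun x ↦ wettingPotential ε (g x)) s := by
  unfold wettingPotential
  fun_prop (disch := intro x hx; have := hg0 x hx; positivity)

lemma neg_div_six_le_mul_wettingPotential {ε h a C : ℝ} (hε : 0 ≤ ε) (hh : 0 < h) (ha : 0 ≤ a)
    (haC : a ≤ C) : -(C / 6) ≤ a * wettingPotential ε h := by
  nlinarith [mul_le_mul_of_nonneg_left (neg_one_div_six_le_wettingPotential hε hh) ha]

lemma mul_div_le_mul_wettingPotential {ε h τ a C : ℝ} (hh : 0 < h) (hhτ : h ≤ τ) (hτε : 2 * τ ≤ ε)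
    (hC : 0 ≤ C) (hCa : C ≤ a) : C * (ε ^ 3 / (12 * τ ^ 3)) ≤ a * wettingPotential ε h :=
  have hε : 0 ≤ ε := by linarith
  have hτ : 0 < τ := hh.trans_le hhτ
  mul_le_mul hCa (div_le_wettingPotential hh hhτ hτε) (by positivity) (hC.trans hCa)

lemma integrableOn_mul_wettingPotential_add_sq {ε C : ℝ} {s : Set ℝ} {A g g' : ℝ → ℝ}
    (hs : IsCompact s) (hA : Measurable A) (hAC : ∀ x ∈ s, |A x| ≤ C) (hg : ContinuousOn g s)
    (hg0 : ∀ x ∈ s, g x ≠ 0) (hg' : ContinuousOn g' s) :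
    IntegrableOn (fun x ↦ A x * wettingPotential ε (g x) + 1 / 2 * g' x ^ 2) s :=
  have hAi : IntegrableOn A s :=
    Measure.integrableOn_of_bounded hs.measure_lt_top.ne hA.aestronglyMeasurable
      (ae_restrict_of_forall_mem hs.measurableSet hAC)
  (hAi.mul_continuousOn (continuousOn_wettingPotential_comp hg hg0 ε) hs).add
    ((continuousOn_const.mul (hg'.pow 2)).integrableOn_compact hs)

theorem sq_sub_le_mul_integral_deriv_sq {g g' : ℝ → ℝ} {c d : ℝ} (hcd : c ≤ d)
    (hg : ∀ x ∈ Icc c d, HasDerivWithinAt g (g' x) (Icc c d) x)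
    (hg' : ContinuousOn g' (Icc c d)) :
    (g d - g c) ^ 2 ≤ (d - c) * ∫ x in c..d, g' x ^ 2 := by
  rcases hcd.eq_or_lt with rfl | hlt
  · simp
  have hint : IntervalIntegrable g' volume c d := hg'.intervalIntegrable_of_Icc hcd
  have hftc : ∫ x in c..d, g' x = g d - g c :=
    intervalIntegral.integral_eq_sub_of_hasDerivAt_of_le hcd
      (fun x hx ↦ (hg x hx).continuousWithinAt)
      (fun x hx ↦ (hg x (Ioo_subset_Icc_self hx)).hasDerivAt (Icc_mem_nhds hx.1 hx.2)) hint
  have hsq : IntervalIntegrable (fun x ↦ g' x ^ 2 / 2) volume c d :=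
    ((hg'.pow 2).div_const 2).intervalIntegrable_of_Icc hcd
  -- AM–GM `l y ≤ l²/2 + y²/2` with `l` the mean slope yields Cauchy–Schwarz.
  set l := (g d - g c) / (d - c)
  have hamgm : ∫ x in c..d, l * g' x ≤ ∫ x in c..d, (l ^ 2 / 2 + g' x ^ 2 / 2) :=
    intervalIntegral.integral_mono_on hcd (hint.const_mul l) (intervalIntegrable_const.add hsq)
      (fun x _ ↦ by nlinarith [sq_nonneg (l - g' x)])
  rw [intervalIntegral.integral_const_mul, hftc,
    intervalIntegral.integral_add intervalIntegrable_const hsq, intervalIntegral.integral_const,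
    intervalIntegral.integral_div, smul_eq_mul] at hamgm
  have hdc : 0 < d - c := sub_pos.2 hlt
  simp only [l] at hamgm
  field_simp at hamgm
  nlinarith

theorem exists_Icc_subset_le_add_of_integral_deriv_sq_le {g g' : ℝ → ℝ} {a b K τ x₀ : ℝ}
    (hg : ∀ x ∈ Icc a b, HasDerivWithinAt g (g' x) (Icc a b) x)
    (hg' : ContinuousOn g' (Icc a b)) (hK : ∫ x in a..b, g' x ^ 2 ≤ K) (hK0 : 0 < K)
    (hτ : 0 ≤ τ) (hτab : τ ^ 2 ≤ K * (b - a)) (hx₀ : x₀ ∈ Icc a b) :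
    ∃ c, Icc c (c + τ ^ 2 / K) ⊆ Icc a b ∧ ∀ x ∈ Icc c (c + τ ^ 2 / K), g x ≤ g x₀ + τ := by
  set δ := τ ^ 2 / K
  have hδ : 0 ≤ δ := by positivity
  have hδab : δ ≤ b - a := by rwa [div_le_iff₀ hK0, mul_comm]
  obtain ⟨c, hc, hx₀c⟩ : ∃ c, Icc c (c + δ) ⊆ Icc a b ∧ x₀ ∈ Icc c (c + δ) :=
    ⟨min x₀ (b - δ), Icc_subset_Icc (le_min hx₀.1 (by linarith))
        (by linarith [min_le_right x₀ (b - δ)]),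
      min_le_left _ _,
      by rw [← min_add_add_right]; exact le_min (by linarith) (by simpa using hx₀.2)⟩
  have hosc : ∀ u ∈ Icc c (c + δ), ∀ v ∈ Icc c (c + δ), u ≤ v → (g v - g u) ^ 2 ≤ τ ^ 2 := by
    intro u hu v hv huv
    have huv' : Icc u v ⊆ Icc a b := (Icc_subset_Icc hu.1 hv.2).trans hc
    calc (g v - g u) ^ 2 ≤ (v - u) * ∫ y in u..v, g' y ^ 2 :=
          sq_sub_le_mul_integral_deriv_sq huv (fun y hy ↦ (hg y (huv' hy)).mono huv')
            (hg'.mono huv')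
      _ ≤ δ * K := by
          gcongr
          · exact intervalIntegral.integral_nonneg huv fun y _ ↦ sq_nonneg _
          · linarith [hu.1, hv.2]
          · refine le_trans (intervalIntegral.integral_mono_interval (huv' ⟨le_rfl, huv⟩).1 huv
              (huv' ⟨huv, le_rfl⟩).2 (.of_forall fun y ↦ sq_nonneg (g' y)) ?_) hK
            exact (hg'.pow 2).intervalIntegrable_of_Icc (hx₀.1.trans hx₀.2)
      _ = τ ^ 2 := div_mul_cancel₀ _ hK0.ne'
  refine ⟨c, hc, fun x hx ↦ ?_⟩
  have hsq : (g x - g x₀) ^ 2 ≤ τ ^ 2 := by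
    rcases le_total x₀ x with h | h
    · exact hosc x₀ hx₀c x hx h
    · rw [← neg_sub, neg_sq]
      exact hosc x hx x₀ hx₀c h
  linarith [(abs_le_of_sq_le_sq' hsq hτ).2]

theorem sq_div_mul_le_of_integral_le {g g' G : ℝ → ℝ} {a b K τ M x₀ : ℝ}
    (hg : ∀ x ∈ Icc a b, HasDerivWithinAt g (g' x) (Icc a b) x)
    (hg' : ContinuousOn g' (Icc a b)) (hGi : IntegrableOn G (Icc a b))
    (hG : ∀ x ∈ Icc a b, g' x ^ 2 / 2 ≤ G x) (hGK : ∫ x in a..b, G x ≤ K) (hK : 0 < K)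
    (hτ : 0 ≤ τ) (hτab : τ ^ 2 ≤ 2 * K * (b - a)) (hx₀ : x₀ ∈ Icc a b)
    (hM : ∀ x ∈ Icc a b, g x ≤ g x₀ + τ → M ≤ G x) :
    τ ^ 2 / (2 * K) * M ≤ K := by
  have hab : a ≤ b := hx₀.1.trans hx₀.2
  have hGab : IntervalIntegrable G volume a b :=
    (intervalIntegrable_iff_integrableOn_Icc_of_le hab).2 hGi
  have hkin : ∫ x in a..b, g' x ^ 2 ≤ 2 * K := by
    have hsq : IntervalIntegrable (fun x ↦ g' x ^ 2 / 2) volume a b :=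
      ((hg'.pow 2).div_const 2).intervalIntegrable_of_Icc hab
    have := intervalIntegral.integral_mono_on hab hsq hGab hG
    rw [intervalIntegral.integral_div] at this
    linarith
  obtain ⟨c, hc, hgc⟩ :=
    exists_Icc_subset_le_add_of_integral_deriv_sq_le hg hg' hkin (by positivity) hτ hτab hx₀
  have hcc : c ≤ c + τ ^ 2 / (2 * K) := le_add_of_nonneg_right (by positivity)
  calc τ ^ 2 / (2 * K) * M = ∫ _ in c..c + τ ^ 2 / (2 * K), M := by simp
    _ ≤ ∫ x in c..c + τ ^ 2 / (2 * K), G x :=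
        intervalIntegral.integral_mono_on hcc intervalIntegrable_const
          ((intervalIntegrable_iff_integrableOn_Icc_of_le hcc).2 (hGi.mono_set hc))
          fun x hx ↦ hM x (hc hx) (hgc x hx)
    _ ≤ ∫ x in a..b, G x := by
        have hG0 : ∀ x ∈ Ioc a b, 0 ≤ G x := fun x hx ↦
          (div_nonneg (sq_nonneg _) zero_le_two).trans (hG x (Ioc_subset_Icc_self hx))
        exact intervalIntegral.integral_mono_interval (hc ⟨le_rfl, hcc⟩).1 hcc
          (hc ⟨hcc, le_rfl⟩).2 (ae_restrict_of_forall_mem measurableSet_Ioc hG0) hGab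
    _ ≤ K := hGK

theorem stmt_14 (ε L Amin Amax E₀ : ℝ) (hε : 0 < ε) (hL : 0 < L)
    (hAmin : 0 < Amin) (hle : Amin ≤ Amax) :
    ∃ c : ℝ, 0 < c ∧
      ∀ (A : ℝ → ℝ), Measurable A →
        (∀ x ∈ Set.Icc 0 L, A x ∈ Set.Icc Amin Amax) →
      ∀ (g g' : ℝ → ℝ),
        (∀ x ∈ Set.Icc 0 L, 0 < g x) →
        (∀ x ∈ Set.Icc 0 L, HasDerivWithinAt g (g' x) (Set.Icc 0 L) x) →
        ContinuousOn g' (Set.Icc 0 L) →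
        (∫ x in (0:ℝ)..L, (A x * wettingPotential ε (g x) + (1/2) * (g' x)^2)) ≤ E₀ →
        ∀ x ∈ Set.Icc 0 L, c ≤ g x := by
  obtain ⟨K, hK, hEK⟩ : ∃ K, 0 < K ∧ E₀ + L * Amax / 6 ≤ K :=
    ⟨max (E₀ + L * Amax / 6) 1, lt_max_of_lt_right one_pos, le_max_left _ _⟩
  set c := min (min (ε / 4) √(2 * K * L)) (Amin * ε ^ 3 / (200 * K ^ 2))
  have hc : 0 < c := by positivity
  refine ⟨c, hc, fun A hA hAmem g g' hg hgd hg' hE x₀ hx₀ ↦ ?_⟩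
  by_contra! hlt
  have hFi := integrableOn_mul_wettingPotential_add_sq (ε := ε) isCompact_Icc hA
    (fun x hx ↦ abs_le_max_abs_abs (hAmem x hx).1 (hAmem x hx).2)
    (fun x hx ↦ (hgd x hx).continuousWithinAt) (fun x hx ↦ (hg x hx).ne') hg'
  have hGK : ∫ x in 0..L, (A x * wettingPotential ε (g x) + 1 / 2 * g' x ^ 2 + Amax / 6) ≤ K := by
    rw [intervalIntegral.integral_add ((intervalIntegrable_iff_integrableOn_Icc_of_le hL.le).2 hFi)
      intervalIntegrable_const, intervalIntegral.integral_const, smul_eq_mul]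
    linarith
  have hcL : c ^ 2 ≤ 2 * K * (L - 0) := by
    simpa using (Real.le_sqrt' hc).1 ((min_le_left _ _).trans (min_le_right _ _))
  have hcε : 2 * (2 * c) ≤ ε := by
    linarith [show c ≤ ε / 4 from (min_le_left _ _).trans (min_le_left _ _)]
  have key := sq_div_mul_le_of_integral_le
    (G := fun x ↦ A x * wettingPotential ε (g x) + 1 / 2 * g' x ^ 2 + Amax / 6)
    (M := Amin * (ε ^ 3 / (12 * (2 * c) ^ 3))) hgd hg'
    (hFi.add (integrableOn_const measure_Icc_lt_top.ne))
    (fun x hx ↦ by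
      linarith [neg_div_six_le_mul_wettingPotential hε.le (hg x hx)
        (hAmin.le.trans (hAmem x hx).1) (hAmem x hx).2])
    hGK hK hc.le hcL hx₀ fun x hx hgx ↦ by
      linarith [mul_div_le_mul_wettingPotential (hg x hx) (by linarith) hcε hAmin.le
        (hAmem x hx).1, sq_nonneg (g' x), hAmin.trans_le hle]
  have hcK : c ≤ Amin * ε ^ 3 / (200 * K ^ 2) := min_le_right _ _
  rw [show c ^ 2 / (2 * K) * (Amin * (ε ^ 3 / (12 * (2 * c) ^ 3))) = Amin * ε ^ 3 / (192 * K * c)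
    by field_simp; ring, div_le_iff₀ (by positivity)] at key
  rw [le_div_iff₀ (by positivity)] at hcK
  nlinarith [mul_pos (mul_pos hK hK) hc]
end

section
/- Let ε > 0, L > 0, 0 < A_min ≤ A_max, and E₀ ∈ ℝ. Then there exists c > 0, depending only on ε, L, A_min, A_max, and E₀ (and in particular independent of T), such that the following holds: for every T > 0, every measurable A : [0, L] → [A_min, A_max], and every function h : [0, L] × [0, T] → (0, ∞) such that h(·, t) is continuously differentiable in x for each t ∈ [0, T] and the energy E(t) = ∫₀^L [A(x)·U_ε(h(x,t)) + (1/2)(∂h/∂x)²(x,t)] dx satisfies E(t) ≤ E₀ for all t ∈ [0, T], one has h(x, t) ≥ c for all (x, t) ∈ [0, L] × [0, T]. Consequently, solutions of the thin-film equation with positive initial data of finite energy remain uniformly positive for all time. -/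
open Set MeasureTheory

namespace wettingPotential

variable {ε y : ℝ}

theorem add_one_sixth (hy : y ≠ 0) :
    wettingPotential ε y + 1 / 6 = (y - ε) ^ 2 * (y + 2 * ε) / (6 * y ^ 3) := by
  unfold wettingPotential; field_simp; ring

theorem neg_one_sixth_le (hε : 0 ≤ ε) (hy : 0 < y) : -(1 / 6) ≤ wettingPotential ε y := by
  have : 0 ≤ (y - ε) ^ 2 * (y + 2 * ε) / (6 * y ^ 3) := by positivity
  linarith [add_one_sixth (ε := ε) hy.ne']

theorem antitoneOn : AntitoneOn (wettingPotential ε) (Ioc 0 ε) := by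
  rintro a ⟨ha, -⟩ b ⟨hb, hbε⟩ hab
  have key : wettingPotential ε a - wettingPotential ε b
      = ε ^ 2 * (b - a) * (2 * ε * (a ^ 2 + a * b + b ^ 2) - 3 * a * b * (a + b))
        / (6 * a ^ 3 * b ^ 3) := by
    unfold wettingPotential; field_simp; ring
  have hnum : 0 ≤ 2 * ε * (a ^ 2 + a * b + b ^ 2) - 3 * a * b * (a + b) := by
    nlinarith [sq_nonneg (a - b), mul_pos ha hb]
  have : 0 ≤ ε ^ 2 * (b - a) * (2 * ε * (a ^ 2 + a * b + b ^ 2) - 3 * a * b * (a + b))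
      / (6 * a ^ 3 * b ^ 3) :=
    div_nonneg (mul_nonneg (mul_nonneg (sq_nonneg ε) (sub_nonneg.2 hab)) hnum) (by positivity)
  linarith

theorem le_of_le_div_three (hy : 0 < y) {b : ℝ} (hyb : y ≤ b)
    (hb : b ≤ ε / 3) : ε ^ 3 / (6 * b ^ 3) ≤ wettingPotential ε y := by
  have hb0 : 0 < b := hy.trans_le hyb
  have h1 : wettingPotential ε b - ε ^ 3 / (6 * b ^ 3) = ε ^ 2 * (ε - 3 * b) / (6 * b ^ 3) := by
    unfold wettingPotential; field_simp; ring
  have h2 : 0 ≤ ε ^ 2 * (ε - 3 * b) / (6 * b ^ 3) :=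
    div_nonneg (mul_nonneg (sq_nonneg ε) (by linarith)) (by positivity)
  have := antitoneOn (ε := ε) ⟨hy, by linarith⟩ ⟨hb0, by linarith⟩ hyb
  linarith

theorem continuousOn : ContinuousOn (wettingPotential ε) (Ioi 0) := by
  unfold wettingPotential
  refine ContinuousOn.add ?_ ?_ <;>
    exact continuousOn_const.div (by fun_prop) fun y (hy : 0 < y) => by positivity

end wettingPotential

theorem abs_sub_le_integral_sq_div_add {f g : ℝ → ℝ} {a b p q r : ℝ}
    (hf : ∀ x ∈ Icc a b, HasDerivWithinAt f (g x) (Icc a b) x) (hg : ContinuousOn g (Icc a b))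
    (hp : p ∈ Icc a b) (hq : q ∈ Icc a b) (hr : 0 < r) :
    |f q - f p| ≤ (∫ x in a..b, g x ^ 2) / (2 * r) + r * |q - p| / 2 := by
  wlog hpq : p ≤ q generalizing p q
  · simpa only [abs_sub_comm] using this hq hp (le_of_not_ge hpq)
  have hsub : Icc p q ⊆ Icc a b := Icc_subset_Icc hp.1 hq.2
  have hg_int : ∀ {u v}, u ≤ v → Icc u v ⊆ Icc a b →
      IntervalIntegrable (fun x => g x ^ 2) volume u v :=
    fun huv h => ((hg.mono h).pow 2).intervalIntegrable_of_Icc huv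
  have ftc : ∫ x in p..q, g x = f q - f p := by
    refine intervalIntegral.integral_eq_sub_of_hasDerivAt_of_le hpq
      (fun x hx => (hf x (hsub hx)).continuousWithinAt.mono hsub) (fun x hx => ?_)
      ((hg.mono hsub).intervalIntegrable_of_Icc hpq)
    exact (hf x (hsub (Ioo_subset_Icc_self hx))).hasDerivAt
      (Icc_mem_nhds (hp.1.trans_lt hx.1) (hx.2.trans_le hq.2))
  have amgm : ∀ x, |g x| ≤ g x ^ 2 / (2 * r) + r / 2 := fun x => by
    rw [div_add_div _ _ (by positivity) two_ne_zero, le_div_iff₀ (by positivity)]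
    nlinarith [sq_nonneg (|g x| - r), sq_abs (g x)]
  calc |f q - f p| = |∫ x in p..q, g x| := by rw [ftc]
    _ ≤ ∫ x in p..q, |g x| := intervalIntegral.abs_integral_le_integral_abs hpq
    _ ≤ ∫ x in p..q, (g x ^ 2 / (2 * r) + r / 2) :=
      intervalIntegral.integral_mono_on hpq ((hg.mono hsub).abs.intervalIntegrable_of_Icc hpq)
        (((hg_int hpq hsub).div_const _).add intervalIntegrable_const) fun x _ => amgm x
    _ = (∫ x in p..q, g x ^ 2) / (2 * r) + r * |q - p| / 2 := by
      rw [intervalIntegral.integral_add ((hg_int hpq hsub).div_const _) intervalIntegrable_const,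
        intervalIntegral.integral_div, intervalIntegral.integral_const, smul_eq_mul,
        abs_of_nonneg (sub_nonneg.2 hpq)]
      ring
    _ ≤ (∫ x in a..b, g x ^ 2) / (2 * r) + r * |q - p| / 2 := by
      gcongr
      exact intervalIntegral.integral_mono_interval hp.1 hpq hq.2
        (Filter.Eventually.of_forall fun x => sq_nonneg (g x))
        (hg_int (hp.1.trans (hpq.trans hq.2)) subset_rfl)

theorem abs_sub_le_of_integral_sq_le {f g : ℝ → ℝ} {a b p q c M : ℝ}
    (hf : ∀ x ∈ Icc a b, HasDerivWithinAt f (g x) (Icc a b) x) (hg : ContinuousOn g (Icc a b))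
    (hp : p ∈ Icc a b) (hq : q ∈ Icc a b) (hc : 0 < c) (hM : 0 < M)
    (hS : ∫ x in a..b, g x ^ 2 ≤ 2 * M) (hpq : |q - p| ≤ c ^ 2 / (2 * M)) :
    |f q - f p| ≤ c := by
  have hr : 0 < 2 * M / c := by positivity
  calc |f q - f p| ≤ (∫ x in a..b, g x ^ 2) / (2 * (2 * M / c)) + 2 * M / c * |q - p| / 2 :=
        abs_sub_le_integral_sq_div_add hf hg hp hq hr
    _ ≤ 2 * M / (2 * (2 * M / c)) + 2 * M / c * (c ^ 2 / (2 * M)) / 2 := by gcongr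
    _ = c := by field_simp; ring

theorem integral_add_const_le {φ : ℝ → ℝ} {m a b p q : ℝ} (hφ : IntervalIntegrable φ volume a b)
    (hm : ∀ x ∈ Icc a b, -m ≤ φ x) (hap : a ≤ p) (hpq : p ≤ q) (hqb : q ≤ b) :
    ∫ x in p..q, (φ x + m) ≤ (∫ x in a..b, φ x) + (b - a) * m := by
  have hnonneg : 0 ≤ᵐ[volume.restrict (Ioc a b)] fun x => φ x + m :=
    ae_restrict_of_forall_mem measurableSet_Ioc fun x hx =>
      neg_le_iff_add_nonneg.1 (hm x (Ioc_subset_Icc_self hx))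
  calc ∫ x in p..q, (φ x + m)
      ≤ ∫ x in a..b, (φ x + m) :=
        intervalIntegral.integral_mono_interval hap hpq hqb hnonneg
          (hφ.add intervalIntegrable_const)
    _ = (∫ x in a..b, φ x) + (b - a) * m := by
      rw [intervalIntegral.integral_add hφ intervalIntegrable_const,
        intervalIntegral.integral_const, smul_eq_mul]

/-- `g` plays the role of `∂ₓf`. -/
noncomputable def energyDensity (ε : ℝ) (A f g : ℝ → ℝ) (x : ℝ) : ℝ :=
  A x * wettingPotential ε (f x) + 1 / 2 * g x ^ 2

section EnergyDensity

variable {ε L Amin Amax : ℝ} {A f g : ℝ → ℝ}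

theorem neg_div_six_add_le_energyDensity (hε : 0 < ε) (hAmin : 0 ≤ Amin) {x : ℝ}
    (hAx : A x ∈ Icc Amin Amax) (hfx : 0 < f x) :
    -(Amax / 6) + 1 / 2 * g x ^ 2 ≤ energyDensity ε A f g x := by
  have := mul_le_mul_of_nonneg_left (wettingPotential.neg_one_sixth_le hε.le hfx)
    (hAmin.trans hAx.1)
  unfold energyDensity
  linarith [hAx.2]

theorem intervalIntegrable_energyDensity (hL : 0 ≤ L) (hA : Measurable A)
    (hAb : ∀ x ∈ Icc 0 L, A x ∈ Icc Amin Amax) (hf : ContinuousOn f (Icc 0 L))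
    (hfpos : ∀ x ∈ Icc 0 L, 0 < f x) (hg : ContinuousOn g (Icc 0 L)) :
    IntervalIntegrable (energyDensity ε A f g) volume 0 L := by
  rw [intervalIntegrable_iff_integrableOn_Icc_of_le hL]
  have hU : IntegrableOn (fun x => wettingPotential ε (f x)) (Icc 0 L) :=
    (wettingPotential.continuousOn.comp hf hfpos).integrableOn_Icc
  have hAU : IntegrableOn (fun x => A x * wettingPotential ε (f x)) (Icc 0 L) :=
    hU.bdd_mul hA.aestronglyMeasurable (c := max |Amin| |Amax|) <|
      ae_restrict_of_forall_mem measurableSet_Icc fun x hx =>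
        abs_le_max_abs_abs (hAb x hx).1 (hAb x hx).2
  exact hAU.add ((hg.pow 2).integrableOn_Icc.const_mul _)

theorem integral_energyDensity_add_le (hε : 0 < ε) (hAmin : 0 ≤ Amin)
    (hAb : ∀ x ∈ Icc 0 L, A x ∈ Icc Amin Amax) (hfpos : ∀ x ∈ Icc 0 L, 0 < f x)
    (he : IntervalIntegrable (energyDensity ε A f g) volume 0 L) {p q : ℝ} (hp : 0 ≤ p)
    (hpq : p ≤ q) (hqL : q ≤ L) :
    ∫ x in p..q, (energyDensity ε A f g x + Amax / 6) ≤
      (∫ x in 0..L, energyDensity ε A f g x) + L * Amax / 6 := by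
  have := integral_add_const_le he (fun x hx =>
    (le_add_of_nonneg_right (by positivity)).trans
      (neg_div_six_add_le_energyDensity hε hAmin (hAb x hx) (hfpos x hx))) hp hpq hqL
  linarith

theorem integral_sq_le_energy (hε : 0 < ε) (hL : 0 ≤ L) (hAmin : 0 ≤ Amin)
    (hAb : ∀ x ∈ Icc 0 L, A x ∈ Icc Amin Amax) (hfpos : ∀ x ∈ Icc 0 L, 0 < f x)
    (hg : ContinuousOn g (Icc 0 L)) (he : IntervalIntegrable (energyDensity ε A f g) volume 0 L) :
    ∫ x in 0..L, g x ^ 2 ≤ 2 * ((∫ x in 0..L, energyDensity ε A f g x) + L * Amax / 6) := by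
  have := (intervalIntegral.integral_mono_on hL
    (f := fun x => 1 / 2 * g x ^ 2) ((hg.pow 2).intervalIntegrable_of_Icc hL |>.const_mul _)
    (he.add intervalIntegrable_const) fun x hx => by
      linarith [neg_div_six_add_le_energyDensity (g := g) hε hAmin (hAb x hx) (hfpos x hx)]).trans
    (integral_energyDensity_add_le hε hAmin hAb hfpos he le_rfl hL le_rfl)
  rw [intervalIntegral.integral_const_mul] at this
  linarith

theorem mul_le_integral_energyDensity_add (hε : 0 < ε) (hAmin : 0 ≤ Amin) {p q b : ℝ}
    (hpq : p ≤ q) (hAb : ∀ x ∈ Icc p q, A x ∈ Icc Amin Amax) (hfpos : ∀ x ∈ Icc p q, 0 < f x)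
    (hfb : ∀ x ∈ Icc p q, f x ≤ b) (hb : b ≤ ε / 3)
    (he : IntervalIntegrable (energyDensity ε A f g) volume p q) :
    (q - p) * (Amin * (ε ^ 3 / (6 * b ^ 3))) ≤
      ∫ x in p..q, (energyDensity ε A f g x + Amax / 6) := by
  have hpt : ∀ x ∈ Icc p q, Amin * (ε ^ 3 / (6 * b ^ 3)) ≤ energyDensity ε A f g x + Amax / 6 :=
    fun x hx => by
      have hb0 : 0 < b := (hfpos x hx).trans_le (hfb x hx)
      have hU := wettingPotential.le_of_le_div_three (ε := ε) (hfpos x hx) (hfb x hx) hb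
      have := mul_le_mul (hAb x hx).1 hU (by positivity) (hAmin.trans (hAb x hx).1)
      unfold energyDensity
      linarith [sq_nonneg (g x), hAmin.trans ((hAb x hx).1.trans (hAb x hx).2)]
  have := intervalIntegral.integral_mono_on hpq intervalIntegrable_const
    (he.add intervalIntegrable_const) hpt
  rwa [intervalIntegral.integral_const, smul_eq_mul] at this

end EnergyDensity

/-- `c ≤ ε / 6` keeps `2c ≤ ε / 3`; `c ≤ min 1 (M L)` fits an interval of length `c² / (2M)`
into `[0, L]`; `97 > 96` makes the energy on that interval exceed `M`. -/
noncomputable def heightBound (ε L Amin M : ℝ) : ℝ :=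
  min (min (ε / 6) 1) (min (M * L) (Amin * ε ^ 3 / (97 * M ^ 2)))

theorem heightBound_pos {ε L Amin M : ℝ} (hε : 0 < ε) (hL : 0 < L) (hAmin : 0 < Amin)
    (hM : 0 < M) : 0 < heightBound ε L Amin M := by
  unfold heightBound; apply lt_min <;> apply lt_min <;> positivity

theorem heightBound_le_of_integral_energyDensity_le {ε L Amin Amax M : ℝ} {A f g : ℝ → ℝ}
    (hε : 0 < ε) (hL : 0 < L) (hAmin : 0 < Amin) (hM : 0 < M) (hA : Measurable A)
    (hAb : ∀ x ∈ Icc 0 L, A x ∈ Icc Amin Amax) (hfpos : ∀ x ∈ Icc 0 L, 0 < f x)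
    (hf : ∀ x ∈ Icc 0 L, HasDerivWithinAt f (g x) (Icc 0 L) x) (hg : ContinuousOn g (Icc 0 L))
    (hE : (∫ x in 0..L, energyDensity ε A f g x) + L * Amax / 6 ≤ M) :
    ∀ x ∈ Icc 0 L, heightBound ε L Amin M ≤ f x := by
  set c := heightBound ε L Amin M
  have hc : 0 < c := heightBound_pos hε hL hAmin hM
  have hcε : c ≤ ε / 6 := (min_le_left _ _).trans (min_le_left _ _)
  have hc1 : c ≤ 1 := (min_le_left _ _).trans (min_le_right _ _)
  have hcL : c ≤ M * L := (min_le_right _ _).trans (min_le_left _ _)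
  have hcA : c ≤ Amin * ε ^ 3 / (97 * M ^ 2) := (min_le_right _ _).trans (min_le_right _ _)
  intro x₀ hx₀
  by_contra! hlt
  have he : IntervalIntegrable (energyDensity ε A f g) volume 0 L :=
    intervalIntegrable_energyDensity hL.le hA hAb
      (fun x hx => (hf x hx).continuousWithinAt) hfpos hg
  have hS : ∫ x in 0..L, g x ^ 2 ≤ 2 * M :=
    (integral_sq_le_energy hε hL.le hAmin.le hAb hfpos hg he).trans (by linarith)
  set δ := c ^ 2 / (2 * M) with hδ_def
  have hδ : 0 < δ := by positivity
  have hδL : δ ≤ L := by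
    rw [div_le_iff₀ (by positivity)]
    nlinarith [mul_le_mul hc1 hcL hc.le zero_le_one]
  set a := min x₀ (L - δ)
  have ha : 0 ≤ a := le_min hx₀.1 (sub_nonneg.2 hδL)
  have haδ : a + δ ≤ L := by linarith [min_le_right x₀ (L - δ)]
  have hsub : Icc a (a + δ) ⊆ Icc 0 L := Icc_subset_Icc ha haδ
  have hsmall : ∀ x ∈ Icc a (a + δ), f x ≤ 2 * c := fun x hx => by
    have hxx₀ : |x - x₀| ≤ δ := by
      rw [abs_le]; constructor <;> cases min_choice x₀ (L - δ) <;> grind [hx₀.2]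
    have := abs_sub_le_of_integral_sq_le hf hg hx₀ (hsub hx) hc hM hS hxx₀
    linarith [le_abs_self (f x - f x₀)]
  have hbig := (mul_le_integral_energyDensity_add hε hAmin.le (by linarith)
    (fun x hx => hAb x (hsub hx)) (fun x hx => hfpos x (hsub hx)) hsmall (by linarith)
    (he.mono_set (by rw [uIcc_of_le (by linarith), uIcc_of_le hL.le]; exact hsub))).trans
    (integral_energyDensity_add_le hε hAmin.le hAb hfpos he ha (by linarith) haδ)
  have key : (a + δ - a) * (Amin * (ε ^ 3 / (6 * (2 * c) ^ 3))) =
      Amin * ε ^ 3 / (96 * M * c) := by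
    rw [hδ_def]; field_simp; ring
  rw [key, div_le_iff₀ (by positivity)] at hbig
  rw [le_div_iff₀ (by positivity)] at hcA
  nlinarith [mul_pos (mul_pos hM hM) hc]

theorem stmt_15_general (ε L Amin Amax E₀ : ℝ) (hε : 0 < ε) (hL : 0 < L)
    (hAmin : 0 < Amin) :
    ∃ c : ℝ, 0 < c ∧
      ∀ (T : ℝ), 0 < T →
      ∀ (A : ℝ → ℝ), Measurable A →
        (∀ x ∈ Set.Icc 0 L, A x ∈ Set.Icc Amin Amax) →
      ∀ (h hx : ℝ → ℝ → ℝ),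
        (∀ t ∈ Set.Icc 0 T, ∀ x ∈ Set.Icc 0 L, 0 < h x t) →
        (∀ t ∈ Set.Icc 0 T, ∀ x ∈ Set.Icc 0 L,
          HasDerivWithinAt (fun ξ => h ξ t) (hx x t) (Set.Icc 0 L) x) →
        (∀ t ∈ Set.Icc 0 T, ContinuousOn (fun ξ => hx ξ t) (Set.Icc 0 L)) →
        (∀ t ∈ Set.Icc 0 T,
          (∫ x in (0:ℝ)..L,
            (A x * wettingPotential ε (h x t) + (1/2) * (hx x t)^2)) ≤ E₀) →
        ∀ x ∈ Set.Icc 0 L, ∀ t ∈ Set.Icc 0 T, c ≤ h x t := by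
  set M := max (E₀ + L * Amax / 6) 1
  have hM : 0 < M := lt_max_of_lt_right one_pos
  refine ⟨heightBound ε L Amin M, heightBound_pos hε hL hAmin hM, ?_⟩
  intro T _ A hA hAb h hx hpos hderiv hcont henergy x hxL t ht
  exact heightBound_le_of_integral_energyDensity_le hε hL hAmin hM hA hAb (hpos t ht)
    (hderiv t ht) (hcont t ht) ((add_le_add_left (henergy t ht) _).trans (le_max_left _ _)) x hxL

theorem stmt_15 (ε L Amin Amax E₀ : ℝ) (hε : 0 < ε) (hL : 0 < L)
    (hAmin : 0 < Amin) (hle : Amin ≤ Amax) :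
    ∃ c : ℝ, 0 < c ∧
      ∀ (T : ℝ), 0 < T →
      ∀ (A : ℝ → ℝ), Measurable A →
        (∀ x ∈ Set.Icc 0 L, A x ∈ Set.Icc Amin Amax) →
      ∀ (h hx : ℝ → ℝ → ℝ),
        (∀ t ∈ Set.Icc 0 T, ∀ x ∈ Set.Icc 0 L, 0 < h x t) →
        (∀ t ∈ Set.Icc 0 T, ∀ x ∈ Set.Icc 0 L,
          HasDerivWithinAt (fun ξ => h ξ t) (hx x t) (Set.Icc 0 L) x) →
        (∀ t ∈ Set.Icc 0 T, ContinuousOn (fun ξ => hx ξ t) (Set.Icc 0 L)) →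
        (∀ t ∈ Set.Icc 0 T,
          (∫ x in (0:ℝ)..L,
            (A x * wettingPotential ε (h x t) + (1/2) * (hx x t)^2)) ≤ E₀) →
        ∀ x ∈ Set.Icc 0 L, ∀ t ∈ Set.Icc 0 T, c ≤ h x t :=
  stmt_15_general ε L Amin Amax E₀ hε hL hAmin
end

section
/- Fix A > 0 and p > 0. For each sufficiently small ε > 0, let H_s(ε) ∈ (ε, 4ε/3) be the unique saddle root of A·Π_ε(H) = p in that interval, and suppose H(ε) ≥ 4ε/3 satisfies the first-integral relation A·(U_ε(H_s(ε)) − U_ε(H(ε))) = p·(H_s(ε) − H(ε)). Then H(ε) → A/(6p) as ε → 0⁺; that is, the maximum of the homoclinic droplet on a homogeneous substrate with wetting coefficient A and pressure p satisfies H_max = A/(6p) + O(ε). -/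
/-!
Both potentials are invariant under the scaling `h ↦ h/ε`: `U_ε(h) = U_1(h/ε)` and
`ε Π_ε(h) = Π_1(h/ε)`. The saddle equation then reads `Π_1(H_s/ε) = pε/A → 0`, which forces
`H_s/ε → 1` and hence `U_ε(H_s) → U_1(1) = -1/6`. Since `U_1 ≥ -9/64` on `[4/3, ∞)`, the first
integral `p H = p H_s + A (U_ε(H) - U_ε(H_s))` keeps `H` bounded away from `0`, so `H/ε → ∞`
and `U_ε(H) → 0`. Letting `ε → 0` in the first integral gives `H → A/(6p)`.
-/

open Filter Topology Set

lemma wettingPotential_eq_wettingPotential_one (ε h : ℝ) (hε : ε ≠ 0) :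
    wettingPotential ε h = wettingPotential 1 (h / ε) := by
  rcases eq_or_ne h 0 with rfl | hh
  · simp [wettingPotential]
  · simp only [wettingPotential]
    field_simp

lemma disjoiningPressure_eq_disjoiningPressure_one (ε h : ℝ) (hε : ε ≠ 0) :
    disjoiningPressure ε h = disjoiningPressure 1 (h / ε) / ε := by
  rcases eq_or_ne h 0 with rfl | hh
  · simp [disjoiningPressure]
  · simp only [disjoiningPressure]
    field_simp

lemma wettingPotential_one_one : wettingPotential 1 1 = -1/6 := by
  norm_num [wettingPotential]

lemma continuousAt_wettingPotential_one {y : ℝ} (hy : y ≠ 0) :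
    ContinuousAt (wettingPotential 1) y := by
  unfold wettingPotential
  fun_prop (disch := positivity)

lemma tendsto_wettingPotential_one_atTop : Tendsto (wettingPotential 1) atTop (𝓝 0) := by
  have h2 : Tendsto (fun y : ℝ => -1 ^ 2 / (2 * y ^ 2)) atTop (𝓝 0) :=
    tendsto_const_nhds.div_atTop ((tendsto_pow_atTop two_ne_zero).const_mul_atTop two_pos)
  have h3 : Tendsto (fun y : ℝ => 1 ^ 3 / (3 * y ^ 3)) atTop (𝓝 0) :=
    tendsto_const_nhds.div_atTop ((tendsto_pow_atTop three_ne_zero).const_mul_atTop three_pos)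
  exact zero_add (0 : ℝ) ▸ h2.add h3

lemma neg_nine_div_sixtyFour_le_wettingPotential_one {y : ℝ} (hy : 4/3 ≤ y) :
    -9/64 ≤ wettingPotential 1 y := by
  have hy0 : 0 < y := by linarith
  have hfactor :
      wettingPotential 1 y + 9/64 = (3*y - 4) * (9*y^2 + 12*y - 16) / (192*y^3) := by
    simp only [wettingPotential]
    field_simp
    ring
  have : 0 ≤ (3*y - 4) * (9*y^2 + 12*y - 16) / (192*y^3) := by
    apply div_nonneg (mul_nonneg (by linarith) (by nlinarith)) (by positivity)
  linarith

lemma sub_one_le_disjoiningPressure_one {x : ℝ} (h1 : 1 ≤ x) (h2 : x ≤ 4/3) :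
    x - 1 ≤ 256/81 * disjoiningPressure 1 x := by
  have hx0 : 0 < x := by linarith
  have hπ : disjoiningPressure 1 x = (x - 1) / x^4 := by
    simp only [disjoiningPressure]
    field_simp
  rw [hπ, mul_div_assoc', le_div_iff₀ (by positivity)]
  have : x^4 ≤ (4/3)^4 := pow_le_pow_left₀ hx0.le h2 4
  nlinarith

lemma eventually_pos_and_lt_const_div {a : ℝ} (ha : 0 < a) (b : ℝ) :
    ∀ᶠ ε in 𝓝[>] (0:ℝ), 0 < ε ∧ b < a / ε := by
  filter_upwards [self_mem_nhdsWithin,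
    (tendsto_inv_nhdsGT_zero.const_mul_atTop ha).eventually_gt_atTop b] with ε hε hb
  exact ⟨hε, by rwa [div_eq_mul_inv]⟩

lemma tendsto_div_self_of_saddleRoot {A p : ℝ} (hA : 0 < A) {s : ℝ → ℝ}
    (hs : ∀ᶠ ε in 𝓝[>] 0, s ε ∈ Ioo ε (4*ε/3) ∧ A * disjoiningPressure ε (s ε) = p) :
    Tendsto (fun ε => s ε / ε) (𝓝[>] 0) (𝓝 1) := by
  have hupper : Tendsto (fun ε : ℝ => 1 + 256/81 * (p / A * ε)) (𝓝[>] 0) (𝓝 1) := by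
    apply tendsto_nhdsWithin_of_tendsto_nhds
    have hcont : Continuous fun ε : ℝ => 1 + 256/81 * (p / A * ε) := by fun_prop
    simpa using hcont.tendsto 0
  have hbounds : ∀ᶠ ε in 𝓝[>] 0, 1 ≤ s ε / ε ∧ s ε / ε ≤ 1 + 256/81 * (p / A * ε) := by
    filter_upwards [hs, self_mem_nhdsWithin] with ε ⟨⟨h1, h2⟩, hsaddle⟩ (hε : 0 < ε)
    have hx1 : 1 ≤ s ε / ε := by rw [le_div_iff₀ hε]; linarith
    have hx2 : s ε / ε ≤ 4/3 := by rw [div_le_iff₀ hε]; linarith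
    have hπ : disjoiningPressure 1 (s ε / ε) = p / A * ε := by
      rw [← hsaddle, disjoiningPressure_eq_disjoiningPressure_one ε (s ε) hε.ne']
      field_simp
    refine ⟨hx1, ?_⟩
    linarith [hπ ▸ sub_one_le_disjoiningPressure_one hx1 hx2]
  exact tendsto_of_tendsto_of_tendsto_of_le_of_le' tendsto_const_nhds hupper
    (hbounds.mono fun _ h => h.1) (hbounds.mono fun _ h => h.2)

lemma tendsto_wettingPotential_of_div_tendsto_one {s : ℝ → ℝ}
    (hs : Tendsto (fun ε => s ε / ε) (𝓝[>] 0) (𝓝 1)) :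
    Tendsto (fun ε => wettingPotential ε (s ε)) (𝓝[>] 0) (𝓝 (-1/6)) := by
  rw [← wettingPotential_one_one]
  refine ((continuousAt_wettingPotential_one one_ne_zero).tendsto.comp hs).congr' ?_
  filter_upwards [self_mem_nhdsWithin] with ε (hε : 0 < ε)
  exact (wettingPotential_eq_wettingPotential_one ε (s ε) hε.ne').symm

lemma tendsto_wettingPotential_zero_of_le {h : ℝ → ℝ} {c : ℝ} (hc : 0 < c)
    (hh : ∀ᶠ ε in 𝓝[>] 0, c ≤ h ε) :
    Tendsto (fun ε => wettingPotential ε (h ε)) (𝓝[>] 0) (𝓝 0) := by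
  have hdiv : Tendsto (fun ε => h ε / ε) (𝓝[>] 0) atTop := by
    refine tendsto_atTop_mono' _ ?_ (tendsto_inv_nhdsGT_zero.const_mul_atTop hc)
    filter_upwards [hh, self_mem_nhdsWithin] with ε hcε (hε : 0 < ε)
    rw [div_eq_mul_inv]
    exact mul_le_mul_of_nonneg_right hcε (inv_nonneg.2 hε.le)
  refine (tendsto_wettingPotential_one_atTop.comp hdiv).congr' ?_
  filter_upwards [self_mem_nhdsWithin] with ε (hε : 0 < ε)
  exact (wettingPotential_eq_wettingPotential_one ε (h ε) hε.ne').symm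

lemma eventually_const_le_of_firstIntegral {A p : ℝ} (hA : 0 < A) (hp : 0 < p) {s h : ℝ → ℝ}
    (hUs : Tendsto (fun ε => wettingPotential ε (s ε)) (𝓝[>] 0) (𝓝 (-1/6)))
    (hsh : ∀ᶠ ε in 𝓝[>] 0, ε < s ε ∧ 4*ε/3 ≤ h ε ∧
      A * (wettingPotential ε (s ε) - wettingPotential ε (h ε)) = p * (s ε - h ε)) :
    ∀ᶠ ε in 𝓝[>] 0, 3*A/(320*p) ≤ h ε := by
  filter_upwards [hsh, self_mem_nhdsWithin,
    hUs.eventually_lt_const (by norm_num : (-1/6 : ℝ) < -3/20)]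
    with ε ⟨hs, hh, hrel⟩ (hε : 0 < ε) hUs_lt
  have hUh : -9/64 ≤ wettingPotential ε (h ε) := by
    rw [wettingPotential_eq_wettingPotential_one ε (h ε) hε.ne']
    exact neg_nine_div_sixtyFour_le_wettingPotential_one (by rw [le_div_iff₀ hε]; linarith)
  rw [div_le_iff₀ (by positivity)]
  nlinarith

theorem stmt_19 (A p : ℝ) (hA : 0 < A) (hp : 0 < p) (Hs H : ℝ → ℝ)
    -- for sufficiently small ε, Hs ε is the saddle root of A·Π_ε = p in (ε, 4ε/3)
    (hHs : ∀ ε : ℝ, 0 < ε → p < 27*A/(256*ε) →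
      Hs ε ∈ Set.Ioo ε (4*ε/3) ∧ A * disjoiningPressure ε (Hs ε) = p)
    -- H ε ≥ 4ε/3 satisfies the first-integral relation
    (hH : ∀ ε : ℝ, 0 < ε → p < 27*A/(256*ε) →
      4*ε/3 ≤ H ε ∧
      A * (wettingPotential ε (Hs ε) - wettingPotential ε (H ε)) =
        p * (Hs ε - H ε)) :
    Filter.Tendsto H (nhdsWithin 0 (Set.Ioi 0)) (nhds (A/(6*p))) := by
  have hsmall : ∀ᶠ ε in 𝓝[>] (0:ℝ), 0 < ε ∧ p < 27*A/(256*ε) := by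
    simpa only [div_div] using eventually_pos_and_lt_const_div (by positivity : 0 < 27*A/256) p
  have hsaddle := hsmall.mono fun ε hε => hHs ε hε.1 hε.2
  have hfirst := hsmall.mono fun ε hε => hH ε hε.1 hε.2
  have hid : Tendsto (fun ε : ℝ => ε) (𝓝[>] 0) (𝓝 0) :=
    tendsto_nhdsWithin_of_tendsto_nhds tendsto_id
  have hs : Tendsto Hs (𝓝[>] 0) (𝓝 0) := by
    refine tendsto_of_tendsto_of_tendsto_of_le_of_le' hid
      (by simpa using hid.const_mul (4/3)) ?_ ?_
    all_goals filter_upwards [hsaddle] with ε ⟨⟨h1, h2⟩, _⟩; linarith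
  have hUs :=
    tendsto_wettingPotential_of_div_tendsto_one (tendsto_div_self_of_saddleRoot hA hsaddle)
  have hUH := tendsto_wettingPotential_zero_of_le (by positivity)
    (eventually_const_le_of_firstIntegral hA hp hUs
      ((hsaddle.and hfirst).mono fun ε ⟨⟨⟨hlt, _⟩, _⟩, hle, hrel⟩ => ⟨hlt, hle, hrel⟩))
  have hlim := hs.add ((hUH.sub hUs).const_mul (A / p))
  rw [show (0:ℝ) + A / p * (0 - -1/6) = A / (6*p) by field_simp; ring] at hlim
  refine hlim.congr' ?_
  filter_upwards [hfirst] with ε ⟨_, hrel⟩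
  field_simp
  linarith
end
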